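/- Let f ∈ H(𝔻) be 𝒰-frequently hypercyclic for T_α. Then: if α ≤ 0, limsup_{r→1⁻} (1−r)^{−α} · M_1(f,r) = +∞; and if α > 0, limsup_{r→1⁻} M_1(f,r) > 0. -/

import Mathlib

open Filter Set MeasureTheory
open scoped Topology ENNReal Real Classical

noncomputable section

/-- The weighted Taylor shift `T_α` acting on Taylor-coefficient sequences:
`(T_α a) k = a (k+1) * (1 + 1/(k+1))^α`. -/
def Tshift (α : ℝ) (a : ℕ → ℂ) : ℕ → ℂ :=
  fun k => a (k + 1) * (((1 + 1 / ((k : ℝ) + 1)) ^ α : ℝ) : ℂ)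

/-- The holomorphic function on the unit disc determined by a coefficient sequence. -/
def sumFn (a : ℕ → ℂ) : ℂ → ℂ := fun z => ∑' k : ℕ, a k * z ^ k

/-- `a` is the Taylor-coefficient sequence of a function in `H(𝔻)`
(the power series converges on every disc of radius `r < 1`). -/
def InHD (a : ℕ → ℂ) : Prop :=
  ∀ r : ℝ, 0 ≤ r → r < 1 → Summable (fun k : ℕ => ‖a k‖ * r ^ k)

/-- The integral mean `M_p(f, r)`, `1 ≤ p ≤ ∞`, of the function with coefficient
sequence `a`. -/
def Mp (p : ℝ≥0∞) (a : ℕ → ℂ) (r : ℝ) : ℝ :=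
  if p = ∞ then
    sSup ((fun t : ℝ => ‖sumFn a (r * Complex.exp (Complex.I * t))‖) '' Set.Icc 0 (2 * π))
  else
    (1 / (2 * π) * ∫ t in (0:ℝ)..(2 * π),
      ‖sumFn a (r * Complex.exp (Complex.I * t))‖ ^ p.toReal) ^ (1 / p.toReal)

/-- Upper weighted density of `A ⊆ ℕ` associated with a weight sequence `β`. -/
def upperDensityWt (β : ℕ → ℝ) (A : Set ℕ) : ℝ :=
  Filter.limsup (fun n : ℕ =>
    (∑ k ∈ Finset.Icc 1 n, A.indicator (fun j => β j) k) / ∑ k ∈ Finset.Icc 1 n, β k)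
    Filter.atTop

/-- The weight sequence `β^γ = (e^{n^γ})`. -/
def betaGamma (γ : ℝ) : ℕ → ℝ := fun n => Real.exp ((n : ℝ) ^ γ)

/-- `a` is hypercyclic for `T_α`: its orbit is dense in `H(𝔻)` for the topology of
uniform convergence on compact subsets of the unit disc. -/
def Hypercyclic (α : ℝ) (a : ℕ → ℂ) : Prop :=
  ∀ b : ℕ → ℂ, InHD b → ∀ K : Set ℂ, IsCompact K → K ⊆ Metric.ball (0 : ℂ) 1 →
    ∀ ε : ℝ, 0 < ε → ∃ n : ℕ, ∀ z ∈ K, ‖sumFn ((Tshift α)^[n] a) z - sumFn b z‖ < ε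

/-- `a` is `𝒰_β`-frequently hypercyclic for `T_α`: for every nonempty basic open set of
`H(𝔻)`, the set of return times has positive upper `β`-density. -/
def UFHCwt (β : ℕ → ℝ) (α : ℝ) (a : ℕ → ℂ) : Prop :=
  ∀ b : ℕ → ℂ, InHD b → ∀ K : Set ℂ, IsCompact K → K ⊆ Metric.ball (0 : ℂ) 1 →
    ∀ ε : ℝ, 0 < ε →
      0 < upperDensityWt β
        {n : ℕ | ∀ z ∈ K, ‖sumFn ((Tshift α)^[n] a) z - sumFn b z‖ < ε}

/-- `a` is `𝒰`-frequently hypercyclic for `T_α` (natural upper density of return times). -/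
def UFreqHC (α : ℝ) (a : ℕ → ℂ) : Prop := UFHCwt (fun _ => 1) α a

/-- The conjugate exponent `q` of `p` (`q = 1` when `p = ∞`). -/
def qConj (p : ℝ≥0∞) : ℝ := if p = ∞ then 1 else p.toReal / (p.toReal - 1)

/-- The quantity `1 / max(2, q)`, interpreted as `0` when `p = 1`. -/
def critFactor (p : ℝ≥0∞) : ℝ := if p = 1 then 0 else 1 / max 2 (qConj p)

/-- `limsup_{r → 1⁻}` of a real-valued function of `r ∈ (0,1)`, computed in `EReal`. -/
def limsupR (g : ℝ → ℝ) : EReal :=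
  Filter.limsup (fun r : ℝ => (g r : EReal)) (nhdsWithin 1 (Set.Ioo 0 1))

end

/-!
The constant term of `T_αⁿ f` is `(n+1)^α aₙ`, so the return times of `f` to a neighbourhood of
the constant `C` (an infinite set, having positive upper density) give `(n+1)^α |aₙ| ≥ C - 1`
for infinitely many `n`. At `r = n/(n+1)` we have `(1-r)^{-α} = (n+1)^α` and `rⁿ ≥ e⁻¹`, so the
Cauchy estimate `|aₙ| rⁿ ≤ M₁(f,r)` makes `(1-r)^{-α} M₁(f,r)` unbounded as `r → 1`. For the
second claim it suffices that `f ≠ 0`: a nonzero coefficient `aₘ` gives `M₁(f,r) ≥ |aₘ| rᵐ`.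
-/

open FormalMultilinearSeries

theorem tshift_iterate_apply (α : ℝ) (a : ℕ → ℂ) (n k : ℕ) :
    ((Tshift α)^[n] a) k = a (k + n) * ((((k + n + 1 : ℝ) / (k + 1)) ^ α : ℝ) : ℂ) := by
  induction n generalizing k with
  | zero =>
    have hk : ((k : ℝ) + 1) / (k + 1) = 1 := div_self (by positivity)
    simp [hk]
  | succ n ih =>
    rw [Function.iterate_succ_apply', Tshift, ih, show k + 1 + n = k + (n + 1) by omega, mul_assoc,
      ← Complex.ofReal_mul, ← Real.mul_rpow (by positivity) (by positivity)]
    congr 3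
    push_cast
    field_simp
    ring

theorem tshift_iterate_apply_zero (α : ℝ) (a : ℕ → ℂ) (n : ℕ) :
    ((Tshift α)^[n] a) 0 = a n * (((n + 1 : ℝ) ^ α : ℝ) : ℂ) := by
  simp [tshift_iterate_apply]

theorem sumFn_zero (a : ℕ → ℂ) : sumFn a 0 = a 0 := by
  rw [sumFn, tsum_eq_single 0 fun k hk => by simp [hk]]
  simp

theorem upperDensityWt_one_eq_zero_of_finite {A : Set ℕ} (hA : A.Finite) :
    upperDensityWt (fun _ => 1) A = 0 := by
  have hnonneg (n : ℕ) : 0 ≤ (∑ k ∈ Finset.Icc 1 n, A.indicator (fun _ => (1 : ℝ)) k) /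
      ∑ k ∈ Finset.Icc 1 n, (1 : ℝ) :=
    div_nonneg (Finset.sum_nonneg fun k _ => Set.indicator_nonneg (fun _ _ => zero_le_one) k)
      (by positivity)
  refine Tendsto.limsup_eq (squeeze_zero hnonneg (fun n => ?_)
    (tendsto_const_div_atTop_nhds_zero_nat (hA.toFinset.card : ℝ)))
  have hcount : ∑ k ∈ Finset.Icc 1 n, A.indicator (fun _ => (1 : ℝ)) k ≤ hA.toFinset.card := by
    rw [Finset.sum_indicator_eq_sum_filter, Finset.sum_const, nsmul_one]
    exact_mod_cast Finset.card_le_card fun k hk => hA.mem_toFinset.2 (Finset.mem_filter.1 hk).2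
  simpa using div_le_div_of_nonneg_right hcount n.cast_nonneg

theorem sumFn_eq_ofScalarsSum (a : ℕ → ℂ) : sumFn a = ofScalarsSum (E := ℂ) a := by
  ext z
  simp [sumFn, ofScalars_sum_eq]

theorem InHD.one_le_radius {a : ℕ → ℂ} (ha : InHD a) : 1 ≤ (ofScalars ℂ a).radius := by
  refine ENNReal.le_of_forall_nnreal_lt fun r hr => ?_
  refine le_radius_of_summable _ ?_
  simpa [ofScalars_norm] using ha r r.2 (by exact_mod_cast hr)

theorem InHD.hasFPowerSeriesOnBall {a : ℕ → ℂ} (ha : InHD a) :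
    HasFPowerSeriesOnBall (sumFn a) (ofScalars ℂ a) 0 1 := by
  rw [sumFn_eq_ofScalarsSum]
  exact ((ofScalars ℂ a).hasFPowerSeriesOnBall (zero_lt_one.trans_le ha.one_le_radius)).mono
    one_pos ha.one_le_radius

theorem InHD.differentiableOn {a : ℕ → ℂ} (ha : InHD a) :
    DifferentiableOn ℂ (sumFn a) (Metric.ball 0 1) := by
  simpa [← ENNReal.coe_one, Metric.eball_coe] using ha.hasFPowerSeriesOnBall.differentiableOn

theorem mp_one_eq (a : ℕ → ℂ) (r : ℝ) :
    Mp 1 a r = (2 * π)⁻¹ * ∫ θ in (0:ℝ)..(2 * π), ‖sumFn a (circleMap 0 r θ)‖ := by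
  simp [Mp, circleMap, mul_comm Complex.I]

theorem InHD.norm_coeff_mul_pow_le_mp_one {a : ℕ → ℂ} (ha : InHD a) {r : ℝ} (hr0 : 0 < r)
    (hr1 : r < 1) (n : ℕ) : ‖a n‖ * r ^ n ≤ Mp 1 a r := by
  lift r to NNReal using hr0.le
  have hcauchy : cauchyPowerSeries (sumFn a) 0 r = ofScalars ℂ a :=
    ((ha.differentiableOn.mono (Metric.closedBall_subset_ball hr1)).hasFPowerSeriesOnBall
      (by exact_mod_cast hr0)).hasFPowerSeriesAt.eq_formalMultilinearSeries
      ha.hasFPowerSeriesOnBall.hasFPowerSeriesAt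
  have := norm_cauchyPowerSeries_le (sumFn a) 0 r n
  rw [hcauchy, ofScalars_norm, ← mp_one_eq, NNReal.abs_eq, inv_pow] at this
  exact (le_mul_inv_iff₀ (by positivity)).1 this

theorem UFreqHC.frequently_norm_coeff_sub_lt {α : ℝ} {a : ℕ → ℂ} (hfa : UFreqHC α a) (c : ℂ) :
    ∃ᶠ n in atTop, ‖a n * (((n + 1 : ℝ) ^ α : ℝ) : ℂ) - c‖ < 1 := by
  have hc : InHD fun k => if k = 0 then c else 0 := fun r _ _ =>
    summable_of_ne_finset_zero (s := {0}) fun k hk => by simp_all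
  have hinf := fun hfin => (hfa _ hc {0} isCompact_singleton (by simp) 1 one_pos).ne'
    (upperDensityWt_one_eq_zero_of_finite hfin)
  simpa [Nat.frequently_atTop_iff_infinite, sumFn_zero, tshift_iterate_apply_zero] using hinf

theorem UFreqHC.frequently_le_norm_coeff {α : ℝ} {a : ℕ → ℂ} (hfa : UFreqHC α a) (C : ℝ) :
    ∃ᶠ n in atTop, C ≤ ‖a n‖ * ((n : ℝ) + 1) ^ α := by
  refine (hfa.frequently_norm_coeff_sub_lt (C + 1)).mono fun n hn => ?_
  have hdist := norm_sub_norm_le ((C + 1 : ℝ) : ℂ) (a n * (((n + 1 : ℝ) ^ α : ℝ) : ℂ))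
  rw [norm_sub_rev, norm_mul, Complex.norm_real, Complex.norm_real, Real.norm_eq_abs,
    Real.norm_of_nonneg (by positivity)] at hdist
  push_cast at hdist
  linarith [le_abs_self (C + 1)]

theorem UFreqHC.ne_zero {α : ℝ} {a : ℕ → ℂ} (hfa : UFreqHC α a) : a ≠ 0 := by
  rintro rfl
  obtain ⟨n, hn⟩ := (hfa.frequently_le_norm_coeff 1).exists
  norm_num at hn

theorem tendsto_natCast_div_add_one_nhdsWithin_Ioo :
    Tendsto (fun n : ℕ => (n : ℝ) / (n + 1)) atTop (𝓝[Ioo 0 1] 1) :=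
  tendsto_nhdsWithin_iff.2 ⟨tendsto_natCast_div_add_atTop 1,
    (eventually_ge_atTop 1).mono fun n hn =>
      ⟨by positivity, by rw [div_lt_one (by positivity)]; linarith⟩⟩

theorem le_limsupR_of_frequently {g : ℝ → ℝ} {b : ℝ}
    (h : ∃ᶠ n : ℕ in atTop, b ≤ g (n / (n + 1))) : (b : EReal) ≤ limsupR g :=
  le_limsup_of_frequently_le
    (tendsto_natCast_div_add_one_nhdsWithin_Ioo.frequently
      (h.mono fun _ hn => EReal.coe_le_coe hn))

theorem exp_neg_one_le_natCast_div_add_one_pow (n : ℕ) :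
    Real.exp (-1) ≤ ((n : ℝ) / (n + 1)) ^ n := by
  rcases n.eq_zero_or_pos with rfl | hn
  · simp
  have hinv : (n : ℝ) / (n + 1) = (1 + (n : ℝ)⁻¹)⁻¹ := by field_simp
  rw [hinv, inv_pow, Real.exp_neg]
  exact inv_anti₀ (by positivity) Real.one_add_inv_pow_le_exp

theorem InHD.exp_neg_one_mul_norm_coeff_le_mp_one {a : ℕ → ℂ} (ha : InHD a) {m n : ℕ}
    (hmn : m ≤ n) (hn : 1 ≤ n) : Real.exp (-1) * ‖a m‖ ≤ Mp 1 a (n / (n + 1)) := by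
  have hr0 : (0 : ℝ) < n / (n + 1) := by positivity
  have hr1 : (n : ℝ) / (n + 1) < 1 := by rw [div_lt_one (by positivity)]; linarith
  calc Real.exp (-1) * ‖a m‖ ≤ ((n : ℝ) / (n + 1)) ^ m * ‖a m‖ := by
        gcongr
        exact (exp_neg_one_le_natCast_div_add_one_pow n).trans
          (pow_le_pow_of_le_one hr0.le hr1.le hmn)
    _ ≤ Mp 1 a (n / (n + 1)) := by
        rw [mul_comm]
        exact ha.norm_coeff_mul_pow_le_mp_one hr0 hr1 m

theorem one_sub_natCast_div_add_one_rpow_neg (n : ℕ) (α : ℝ) :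
    (1 - (n : ℝ) / (n + 1)) ^ (-α) = ((n : ℝ) + 1) ^ α := by
  have hn : (0 : ℝ) < n + 1 := by positivity
  rw [show 1 - (n : ℝ) / (n + 1) = ((n : ℝ) + 1)⁻¹ by field_simp; ring,
    Real.rpow_neg (by positivity), Real.inv_rpow hn.le, inv_inv]

theorem UFreqHC.limsupR_one_sub_rpow_neg_mul_mp_one_eq_top {α : ℝ} {a : ℕ → ℂ} (ha : InHD a)
    (hfa : UFreqHC α a) : limsupR (fun r => (1 - r) ^ (-α) * Mp 1 a r) = ⊤ := by
  refine (EReal.eq_top_iff_forall_lt _).2 fun M =>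
    (EReal.coe_lt_coe_iff.2 (lt_add_one M)).trans_le (le_limsupR_of_frequently ?_)
  refine ((hfa.frequently_le_norm_coeff (Real.exp 1 * (M + 1))).and_eventually
    (eventually_ge_atTop 1)).mono fun n ⟨hcoeff, hn⟩ => ?_
  calc M + 1 = Real.exp (-1) * (Real.exp 1 * (M + 1)) := by
        rw [← mul_assoc, ← Real.exp_add]; simp
    _ ≤ Real.exp (-1) * (‖a n‖ * ((n : ℝ) + 1) ^ α) := by gcongr
    _ = ((n : ℝ) + 1) ^ α * (Real.exp (-1) * ‖a n‖) := by ring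
    _ ≤ ((n : ℝ) + 1) ^ α * Mp 1 a (n / (n + 1)) := by
        gcongr
        exact ha.exp_neg_one_mul_norm_coeff_le_mp_one le_rfl hn
    _ = _ := by rw [one_sub_natCast_div_add_one_rpow_neg]

theorem InHD.limsupR_mp_one_pos {a : ℕ → ℂ} (ha : InHD a) (h : a ≠ 0) :
    0 < limsupR (Mp 1 a) := by
  obtain ⟨m, hm⟩ := Function.ne_iff.1 h
  have hpos : 0 < Real.exp (-1) * ‖a m‖ := mul_pos (Real.exp_pos _) (norm_pos_iff.2 hm)
  refine (EReal.coe_pos.2 hpos).trans_le (le_limsupR_of_frequently ?_)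
  exact (eventually_ge_atTop (max m 1)).frequently.mono fun n hn =>
    ha.exp_neg_one_mul_norm_coeff_le_mp_one (le_of_max_le_left hn) (le_of_max_le_right hn)

/-- Theorem 3.4 (lower estimates, `p = 1`): growth of `𝒰`-frequently hypercyclic
functions for `T_α`. -/
theorem stmt8 (α : ℝ) (a : ℕ → ℂ) (ha : InHD a) (hfa : UFreqHC α a) :
    (α ≤ 0 → limsupR (fun r => (1 - r) ^ (-α) * Mp 1 a r) = ⊤) ∧
    (0 < α → 0 < limsupR (fun r => Mp 1 a r)) :=
  ⟨fun _ => hfa.limsupR_one_sub_rpow_neg_mul_mp_one_eq_top ha,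
    fun _ => ha.limsupR_mp_one_pos hfa.ne_zero⟩
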